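/- arXiv:1606.00099 — 6 statements merged into one kernel-verified Lean document; each statement's English description precedes it below -/
import Mathlib

section
/- If g is analytic on the open unit disk U with g(0)=0, g'(0)=1, and g is starlike of order 1/2 (i.e. Re(z g'(z)/g(z)) > 1/2 for all z in U, z ≠ 0), then the function h(z) = -g(z)g(-z)/z (extended by h(0)=0) is analytic on U and starlike, i.e. Re(z h'(z)/h(z)) > 0 for all nonzero z in U. -/
/-!
Write `h z = -(g z * g (-z)) / z`. Analyticity: `h = -(dslope g 0) * g ∘ neg`, and `dslope g 0`
(the analytic extension of `g z / z`) is holomorphic wherever `g` is. Starlikeness: `g` has no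
zeros in `U \ {0}` (otherwise `z g'/g = 0` there), so logarithmic derivatives add and
`z h'/h = z g'(z)/g(z) + (-z) g'(-z)/g(-z) - 1`, whose real part is `> 1/2 + 1/2 - 1 = 0`.
-/

open Complex MeasureTheory

noncomputable section

def unitDisk : Set ℂ := Metric.ball 0 1

def Normalized (f : ℂ → ℂ) : Prop := f 0 = 0 ∧ deriv f 0 = 1

def StarlikeOfOrder (a : ℝ) (g : ℂ → ℂ) : Prop :=
  ∀ z ∈ unitDisk, z ≠ 0 → a < (z * deriv g z / g z).re

def Starlike (g : ℂ → ℂ) : Prop := StarlikeOfOrder 0 g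

def CloseToConvex (f : ℂ → ℂ) : Prop :=
  AnalyticOn ℂ f unitDisk ∧ Normalized f ∧
  ∃ g : ℂ → ℂ, AnalyticOn ℂ g unitDisk ∧ Normalized g ∧ Set.InjOn g unitDisk ∧
    Starlike g ∧ ∀ z ∈ unitDisk, z ≠ 0 → 0 < (z * deriv f z / g z).re

def Subordinate (f g : ℂ → ℂ) : Prop :=
  ∃ w : ℂ → ℂ, AnalyticOn ℂ w unitDisk ∧ w 0 = 0 ∧
    (∀ z ∈ unitDisk, w z ∈ unitDisk) ∧ ∀ z ∈ unitDisk, f z = g (w z)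

def eps (k : ℕ) : ℂ := Complex.exp (2 * Real.pi * Complex.I / k)

def gk (k : ℕ) (g : ℂ → ℂ) (z : ℂ) : ℂ :=
  ∏ v ∈ Finset.range k, (eps k) ^ (-(v : ℤ)) * g ((eps k) ^ v * z)

def Ks (k : ℕ) (l m : ℝ) (φ : ℂ → ℂ) (f : ℂ → ℂ) : Prop :=
  ∃ g : ℂ → ℂ, AnalyticOn ℂ g unitDisk ∧ Normalized g ∧
    StarlikeOfOrder ((k - 1 : ℝ) / k) g ∧
    Subordinate (fun z => (z ^ k * deriv f z
      + z ^ (k + 1) * iteratedDeriv 2 f z * ((l : ℂ) - m + 2 * l * m)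
      + (l : ℂ) * m * z ^ (k + 2) * iteratedDeriv 3 f z) / gk k g z) φ

theorem neg_mem_unitDisk {z : ℂ} (hz : z ∈ unitDisk) : -z ∈ unitDisk := by
  simpa [unitDisk] using hz

theorem StarlikeOfOrder.apply_ne_zero {a : ℝ} {g : ℂ → ℂ} (hs : StarlikeOfOrder a g) (ha : 0 ≤ a)
    {z : ℂ} (hz : z ∈ unitDisk) (hz0 : z ≠ 0) : g z ≠ 0 := by
  intro hgz
  have := hs z hz hz0
  rw [hgz, div_zero, zero_re] at this
  linarith

theorem ite_neg_mul_comp_neg_div_eq {g : ℂ → ℂ} (hg0 : g 0 = 0) :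
    (fun z => if z = 0 then 0 else -(g z * g (-z)) / z) = fun z => -(dslope g 0 z * g (-z)) := by
  funext z
  rcases eq_or_ne z 0 with rfl | hz
  · simp [hg0]
  · rw [if_neg hz, dslope_of_ne _ hz, slope_def_field, hg0, sub_zero, sub_zero]
    ring

theorem analyticOn_neg_dslope_mul_comp_neg {g : ℂ → ℂ} (hg : AnalyticOn ℂ g unitDisk) :
    AnalyticOn ℂ (fun z => -(dslope g 0 z * g (-z))) unitDisk := by
  have hd : DifferentiableOn ℂ g unitDisk := hg.differentiableOn
  have hdslope : DifferentiableOn ℂ (dslope g 0) unitDisk :=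
    (Complex.differentiableOn_dslope (Metric.ball_mem_nhds 0 one_pos)).2 hd
  have hcomp : DifferentiableOn ℂ (fun z => g (-z)) unitDisk :=
    hd.comp (differentiableOn_neg _) fun _ => neg_mem_unitDisk
  exact ((hdslope.mul hcomp).neg.analyticOnNhd Metric.isOpen_ball).analyticOn

theorem mul_logDeriv_neg_mul_comp_neg_div {g : ℂ → ℂ} {z : ℂ} (hz : z ≠ 0) (hgz : g z ≠ 0)
    (hgnz : g (-z) ≠ 0) (hdz : DifferentiableAt ℂ g z) (hdnz : DifferentiableAt ℂ g (-z)) :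
    z * logDeriv (fun w => -(g w * g (-w)) / w) z
      = z * logDeriv g z + -z * logDeriv g (-z) - 1 := by
  have hdcomp : DifferentiableAt ℂ (fun w => g (-w)) z := hdnz.comp z differentiableAt_id.neg
  have hcomp : logDeriv (fun w => g (-w)) z = -logDeriv g (-z) := by
    rw [show (fun w => g (-w)) = g ∘ Neg.neg from rfl, logDeriv_comp hdnz differentiableAt_id.neg,
      deriv_neg', mul_neg_one]
  have hnum : logDeriv (fun w => -(g w * g (-w))) z = logDeriv g z - logDeriv g (-z) := by
    rw [show (fun w => -(g w * g (-w))) = fun w => -1 * (g w * g (-w)) by simp,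
      logDeriv_const_mul z _ (by norm_num), logDeriv_mul z hgz hgnz hdz hdcomp, hcomp,
      sub_eq_add_neg]
  rw [logDeriv_div z (f := fun w => -(g w * g (-w))) (g := fun w => w) (by simp [hgz, hgnz]) hz
    (hdz.mul hdcomp).neg differentiableAt_id, hnum, logDeriv_id']
  field_simp
  ring

theorem stmt0 (g : ℂ → ℂ) (hg : AnalyticOn ℂ g unitDisk) (hn : Normalized g)
    (hs : StarlikeOfOrder (1 / 2) g) :
    AnalyticOn ℂ (fun z => if z = 0 then 0 else -(g z * g (-z)) / z) unitDisk ∧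
    Starlike (fun z => if z = 0 then 0 else -(g z * g (-z)) / z) := by
  refine ⟨ite_neg_mul_comp_neg_div_eq hn.1 ▸ analyticOn_neg_dslope_mul_comp_neg hg, ?_⟩
  intro z hz hz0
  have hnz : -z ∈ unitDisk := neg_mem_unitDisk hz
  have hnz0 : -z ≠ 0 := neg_ne_zero.2 hz0
  have hdiff : ∀ w ∈ unitDisk, DifferentiableAt ℂ g w := fun w hw =>
    hg.differentiableOn.differentiableAt (Metric.isOpen_ball.mem_nhds hw)
  have hlocal : (fun w => if w = 0 then 0 else -(g w * g (-w)) / w)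
      =ᶠ[nhds z] fun w => -(g w * g (-w)) / w := by
    filter_upwards [isOpen_compl_singleton.mem_nhds hz0] with w hw
    exact if_neg hw
  have hz_half := hs z hz hz0
  have hnz_half := hs (-z) hnz hnz0
  rw [mul_div_assoc, ← logDeriv_apply] at hz_half hnz_half ⊢
  rw [(logDeriv_congr_nhds hlocal).eq_of_nhds, mul_logDeriv_neg_mul_comp_neg_div hz0
    (hs.apply_ne_zero (by norm_num) hz hz0) (hs.apply_ne_zero (by norm_num) hnz hnz0)
    (hdiff z hz) (hdiff (-z) hnz), sub_re, add_re, one_re]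
  linarith
end
end

section
/- If p(z) = 1 + c_1 z + c_2 z^2 + ⋯ is analytic on U with Re p(z) > 0, then for any complex number μ, |c_2 - μ c_1^2| ≤ 2 max{1, |2μ - 1|}. -/
open Complex MeasureTheory

noncomputable section

/-!
`ω = (p - 1) / (p + 1)` maps the disk into itself and fixes `0`, so by the Schwarz lemma
`ω z = z h z` with `‖h‖ ≤ 1`, and the Schwarz–Pick inequality at the origin gives
`‖h' 0‖ ≤ 1 - ‖h 0‖ ^ 2`. Expanding `p = (1 + ω) / (1 - ω)` yields `c₁ = 2 a` and
`c₂ = 2 b + 2 a ^ 2` for `a = h 0`, `b = h' 0`, hence `c₂ - μ c₁ ^ 2 = 2 (b - (2 μ - 1) a ^ 2)`,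
whose norm is at most `2 ((1 - ‖a‖ ^ 2) + ‖2 μ - 1‖ ‖a‖ ^ 2) ≤ 2 max 1 ‖2 μ - 1‖`.
-/

open ComplexConjugate Metric Set Filter Topology

lemma norm_sub_one_div_add_one_lt_one {w : ℂ} (hw : 0 < w.re) : ‖(w - 1) / (w + 1)‖ < 1 := by
  have hsq : ‖w - 1‖ ^ 2 < ‖w + 1‖ ^ 2 := by
    simp only [Complex.sq_norm, normSq_apply, sub_re, sub_im, add_re, add_im, one_re, one_im]
    linarith
  have hlt := (sq_lt_sq₀ (norm_nonneg _) (norm_nonneg _)).1 hsq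
  rw [norm_div, div_lt_one ((norm_nonneg _).trans_lt hlt)]
  exact hlt

lemma norm_sub_le_norm_one_sub_conj_mul {a w : ℂ} (ha : ‖a‖ ≤ 1) (hw : ‖w‖ ≤ 1) :
    ‖w - a‖ ≤ ‖1 - conj a * w‖ := by
  have key : ‖1 - conj a * w‖ ^ 2 - ‖w - a‖ ^ 2 = (1 - ‖a‖ ^ 2) * (1 - ‖w‖ ^ 2) := by
    simp only [Complex.sq_norm, normSq_apply, sub_re, sub_im, mul_re, mul_im, one_re, one_im,
      conj_re, conj_im]
    ring
  have : 0 ≤ (1 - ‖a‖ ^ 2) * (1 - ‖w‖ ^ 2) :=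
    mul_nonneg (sub_nonneg.2 (pow_le_one₀ (norm_nonneg a) ha))
      (sub_nonneg.2 (pow_le_one₀ (norm_nonneg w) hw))
  exact (sq_le_sq₀ (norm_nonneg _) (norm_nonneg _)).1 (by linarith)

section SchwarzPick

variable {f : ℂ → ℂ} (hf : DifferentiableOn ℂ f (ball 0 1))
  (hmaps : MapsTo f (ball 0 1) (closedBall 0 1))
include hf hmaps

lemma norm_deriv_le_one_sub_norm_sq_of_norm_lt_one (ha : ‖f 0‖ < 1) :
    ‖deriv f 0‖ ≤ 1 - ‖f 0‖ ^ 2 := by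
  have h0 : (0 : ℂ) ∈ ball (0 : ℂ) 1 := mem_ball_self one_pos
  have hbound : ∀ z ∈ ball (0 : ℂ) 1, ‖f z‖ ≤ 1 := fun z hz => mem_closedBall_zero_iff.1 (hmaps hz)
  set a := f 0
  have hden : ∀ z ∈ ball (0 : ℂ) 1, 1 - conj a * f z ≠ 0 := by
    intro z hz hz1
    have : ‖conj a * f z‖ < 1 := by
      rw [norm_mul, RCLike.norm_conj]
      nlinarith [hbound z hz, norm_nonneg a, norm_nonneg (f z)]
    rw [← sub_eq_zero.1 hz1, norm_one] at this
    exact this.false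
  set F : ℂ → ℂ := fun z => (f z - a) / (1 - conj a * f z)
  have hF : DifferentiableOn ℂ F (ball 0 1) :=
    (hf.sub_const a).div ((differentiableOn_const 1).sub (hf.const_mul _)) hden
  have hFmaps : MapsTo F (ball 0 1) (closedBall (F 0) 1) := by
    intro z hz
    rw [mem_closedBall, show F 0 = 0 by simp [F, a], dist_zero_right, norm_div]
    exact div_le_one_of_le₀ (norm_sub_le_norm_one_sub_conj_mul ha.le (hbound z hz)) (norm_nonneg _)
  have hfd : HasDerivAt f (deriv f 0) 0 :=
    (hf.differentiableAt (isOpen_ball.mem_nhds h0)).hasDerivAt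
  have hFd : HasDerivAt F (deriv f 0 / (1 - ‖a‖ ^ 2 : ℝ)) 0 := by
    have hconj : 1 - conj a * a = ((1 - ‖a‖ ^ 2 : ℝ) : ℂ) := by
      rw [conj_mul']; push_cast; ring
    refine ((hfd.sub_const a).fun_div ((hfd.const_mul (conj a)).const_sub 1)
      (hden 0 h0)).congr_deriv ?_
    rw [← hconj, show f 0 = a from rfl, sub_self, zero_mul, sub_zero]
    field_simp
  have hschwarz := norm_deriv_le_one_of_mapsTo_ball hF hFmaps one_pos
  rwa [hFd.deriv, norm_div, norm_real, Real.norm_of_nonneg (by nlinarith [norm_nonneg a]),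
    div_le_one (by nlinarith [norm_nonneg a])] at hschwarz

lemma norm_deriv_le_one_sub_norm_sq : ‖deriv f 0‖ ≤ 1 - ‖f 0‖ ^ 2 := by
  have h0 : (0 : ℂ) ∈ ball (0 : ℂ) 1 := mem_ball_self one_pos
  have hbound : ∀ z ∈ ball (0 : ℂ) 1, ‖f z‖ ≤ 1 := fun z hz => mem_closedBall_zero_iff.1 (hmaps hz)
  rcases (hbound 0 h0).eq_or_lt with ha | ha
  · have hconst : EqOn f (Function.const ℂ (f 0)) (ball 0 1) :=
      eqOn_of_isPreconnected_of_isMaxOn_norm (convex_ball _ _).isPreconnected isOpen_ball hf h0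
        fun z hz => by simpa [ha] using hbound z hz
    rw [(eventuallyEq_of_mem (isOpen_ball.mem_nhds h0) hconst).deriv_eq,
      show deriv (Function.const ℂ (f 0)) 0 = 0 from deriv_const 0 _, norm_zero, ha]
    norm_num
  · exact norm_deriv_le_one_sub_norm_sq_of_norm_lt_one hf hmaps ha

end SchwarzPick

section Coefficients

variable {𝕜 : Type*} [NontriviallyNormedField 𝕜]

lemma iteratedDeriv_two_const_add_id_mul {g : 𝕜 → 𝕜} (hg : ContDiffAt 𝕜 2 g 0) (c : 𝕜) :
    iteratedDeriv 2 (fun z => c + z * g z) 0 = 2 * deriv g 0 := by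
  rw [iteratedDeriv_const_add two_pos,
    iteratedDeriv_fun_mul (n := 2) (f := fun z => z) contDiffAt_fun_id hg]
  simp [iteratedDeriv_fun_id_zero]

/- `p = 1 + z h (p + 1)` is `p = (1 + ω) / (1 - ω)` with `ω z = z h z`. -/
variable {p h : 𝕜 → 𝕜} (hrepr : p =ᶠ[𝓝 0] fun z => 1 + z * (h z * (p z + 1)))
include hrepr

lemma deriv_zero_of_eventuallyEq_one_add_mul (hh : DifferentiableAt 𝕜 h 0)
    (hp : DifferentiableAt 𝕜 p 0) : deriv p 0 = 2 * h 0 := by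
  have hp0 : p 0 = 1 := by simpa using hrepr.eq_of_nhds
  have hg : DifferentiableAt 𝕜 (fun z => h z * (p z + 1)) 0 := hh.fun_mul (hp.add_const 1)
  rw [hrepr.deriv_eq, (((hasDerivAt_id' 0).fun_mul hg.hasDerivAt).const_add 1).deriv, hp0]
  ring

lemma iteratedDeriv_two_zero_of_eventuallyEq_one_add_mul (hh : ContDiffAt 𝕜 2 h 0)
    (hp : ContDiffAt 𝕜 2 p 0) : iteratedDeriv 2 p 0 = 4 * deriv h 0 + 4 * h 0 ^ 2 := by
  have hp0 : p 0 = 1 := by simpa using hrepr.eq_of_nhds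
  have hh' := hh.differentiableAt two_ne_zero
  have hp' := hp.differentiableAt two_ne_zero
  rw [hrepr.iteratedDeriv_eq, iteratedDeriv_two_const_add_id_mul (hh.mul (hp.add contDiffAt_const)),
    deriv_fun_mul hh' (hp'.add_const 1), deriv_add_const,
    deriv_zero_of_eventuallyEq_one_add_mul hrepr hh' hp', hp0]
  ring

end Coefficients

lemma norm_sub_mul_sq_le_max_of_norm_le_one_sub_norm_sq {a b : ℂ} (hb : ‖b‖ ≤ 1 - ‖a‖ ^ 2)
    (ν : ℂ) : ‖b - ν * a ^ 2‖ ≤ max 1 ‖ν‖ := by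
  have ha : ‖a‖ ^ 2 ≤ 1 := by linarith [norm_nonneg b]
  calc ‖b - ν * a ^ 2‖ ≤ (1 - ‖a‖ ^ 2) * 1 + ‖a‖ ^ 2 * ‖ν‖ := by
        grw [norm_sub_le, norm_mul, norm_pow, hb]; linarith
    _ ≤ (1 - ‖a‖ ^ 2) * max 1 ‖ν‖ + ‖a‖ ^ 2 * max 1 ‖ν‖ := by
        gcongr
        · exact le_max_left _ _
        · exact le_max_right _ _
    _ = max 1 ‖ν‖ := by ring

theorem stmt8 (p : ℂ → ℂ) (hp : AnalyticOn ℂ p unitDisk) (hp0 : p 0 = 1)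
    (hpre : ∀ z ∈ unitDisk, 0 < (p z).re) (μ : ℂ) :
    ‖iteratedDeriv 2 p 0 / 2 - μ * (deriv p 0) ^ 2‖ ≤ 2 * max 1 ‖2 * μ - 1‖ := by
  have hU : unitDisk ∈ 𝓝 (0 : ℂ) := isOpen_ball.mem_nhds (mem_ball_self one_pos)
  have hpA : AnalyticOnNhd ℂ p unitDisk := isOpen_ball.analyticOn_iff_analyticOnNhd.mp hp
  have hne : ∀ z ∈ unitDisk, p z + 1 ≠ 0 := fun z hz h1 => by
    have := hpre z hz
    rw [eq_neg_of_add_eq_zero_left h1] at this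
    norm_num at this
  set ω : ℂ → ℂ := fun z => (p z - 1) / (p z + 1)
  have hω : DifferentiableOn ℂ ω unitDisk := fun z hz =>
    (((hpA z hz).sub analyticAt_const).div ((hpA z hz).add analyticAt_const)
      (hne z hz)).differentiableAt.differentiableWithinAt
  have hω0 : ω 0 = 0 := by simp [ω, hp0]
  have hωmaps : MapsTo ω unitDisk (closedBall (ω 0) 1) := fun z hz => by
    rw [hω0, mem_closedBall_zero_iff]
    exact (norm_sub_one_div_add_one_lt_one (hpre z hz)).le
  set h := dslope ω 0
  have hh : DifferentiableOn ℂ h unitDisk := (differentiableOn_dslope hU).2 hω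
  have hhmaps : MapsTo h unitDisk (closedBall 0 1) := fun z hz => by
    simpa using norm_dslope_le_div_of_mapsTo_ball hω hωmaps hz
  have hrepr : p =ᶠ[𝓝 0] fun z => 1 + z * (h z * (p z + 1)) := by
    filter_upwards [hU] with z hz
    have hωz : z * h z = ω z := by simpa [hω0] using sub_smul_dslope ω 0 z
    rw [← mul_assoc, hωz]
    simp only [ω]
    field_simp [hne z hz]
    ring
  have hhC : ContDiffAt ℂ 2 h 0 := (hh.analyticAt hU).contDiffAt
  have hpC : ContDiffAt ℂ 2 p 0 := (hpA 0 (mem_of_mem_nhds hU)).contDiffAt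
  rw [iteratedDeriv_two_zero_of_eventuallyEq_one_add_mul hrepr hhC hpC,
    deriv_zero_of_eventuallyEq_one_add_mul hrepr (hhC.differentiableAt two_ne_zero)
      (hpC.differentiableAt two_ne_zero)]
  calc ‖(4 * deriv h 0 + 4 * h 0 ^ 2) / 2 - μ * (2 * h 0) ^ 2‖
      = 2 * ‖deriv h 0 - (2 * μ - 1) * h 0 ^ 2‖ := by
        rw [← RCLike.norm_ofNat (K := ℂ) 2, ← norm_mul]
        ring_nf
    _ ≤ 2 * max 1 ‖2 * μ - 1‖ := by
        gcongr
        exact norm_sub_mul_sq_le_max_of_norm_le_one_sub_norm_sq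
          (norm_deriv_le_one_sub_norm_sq hh hhmaps) _
end
end

section
/- Let G(z) = z + b_2 z^2 + b_3 z^3 + ⋯ be a normalized univalent starlike function on U. Then for any real λ, |b_3 - λ b_2^2| ≤ max{1, |3 - 4λ|}. -/
open Complex MeasureTheory

noncomputable section

/-!
For starlike `G`, the Carathéodory function `p = z G' / G` has positive real part and `p 0 = 1`,
so its Cayley transform `w = (p - 1) / (p + 1)` is a Schwarz function. Writing
`w = c₁ z + c₂ z² + ⋯` and comparing Taylor coefficients in `w (z G' + G) = z G' - G` gives
`b₃ - λ b₂² = c₂ + (3 - 4λ) c₁²`. The Schwarz–Pick inequality at the origin, applied to `w z / z`,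
gives `|c₂| ≤ 1 - |c₁|²`, hence `|b₃ - λ b₂²| ≤ (1 - |c₁|²) + |3 - 4λ| |c₁|² ≤ max 1 |3 - 4λ|`.
-/

open Metric Set Filter Topology ComplexConjugate

theorem iteratedDeriv_succ_fun_id_mul_zero {𝕜 : Type*} [NontriviallyNormedField 𝕜] {u : 𝕜 → 𝕜}
    {n : ℕ} (hu : ContDiffAt 𝕜 (n + 1) u 0) :
    iteratedDeriv (n + 1) (fun z => z * u z) 0 = (n + 1) * iteratedDeriv n u 0 := by
  rw [iteratedDeriv_fun_mul (f := fun z => z) contDiffAt_fun_id hu, Finset.sum_eq_single 1]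
  · simp [iteratedDeriv_fun_id_zero]
  · intro i _ hi
    simp [iteratedDeriv_fun_id_zero, hi]
  · simp

theorem sq_norm_one_sub_conj_mul_sub_sq_norm_sub (a u : ℂ) :
    ‖1 - conj a * u‖ ^ 2 - ‖u - a‖ ^ 2 = (1 - ‖a‖ ^ 2) * (1 - ‖u‖ ^ 2) := by
  simp only [← normSq_eq_norm_sq, normSq_apply, sub_re, sub_im, mul_re, mul_im, one_re, one_im,
    conj_re, conj_im]
  ring

theorem norm_sub_div_one_sub_conj_mul_lt_one {a u : ℂ} (ha : ‖a‖ < 1) (hu : ‖u‖ < 1) :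
    ‖(u - a) / (1 - conj a * u)‖ < 1 := by
  have hlt : ‖u - a‖ < ‖1 - conj a * u‖ := by
    refine lt_of_pow_lt_pow_left₀ 2 (norm_nonneg _) (sub_pos.1 ?_)
    rw [sq_norm_one_sub_conj_mul_sub_sq_norm_sub]
    exact mul_pos (sub_pos.2 (pow_lt_one₀ (norm_nonneg a) ha two_ne_zero))
      (sub_pos.2 (pow_lt_one₀ (norm_nonneg u) hu two_ne_zero))
  rw [norm_div, div_lt_one ((norm_nonneg _).trans_lt hlt)]
  exact hlt

theorem Complex.mapsTo_ball_of_mapsTo_closedBall {E : Type*} [NormedAddCommGroup E]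
    [NormedSpace ℂ E] [StrictConvexSpace ℝ E] {f : ℂ → E} {U : Set ℂ} {c : ℂ} {r : ℝ} (hU : IsOpen U)
    (hU' : IsPreconnected U) (hf : DifferentiableOn ℂ f U) (hmaps : MapsTo f U (closedBall 0 r))
    (hc : c ∈ U) (hfc : f c ∈ ball 0 r) : MapsTo f U (ball 0 r) := by
  intro z hz
  by_contra hfz
  have hnorm : ‖f z‖ = r := by
    have := hmaps hz
    simp only [mem_closedBall_zero_iff, mem_ball_zero_iff, not_lt] at this hfz ⊢
    exact le_antisymm this hfz
  have hmax : IsMaxOn (norm ∘ f) U z := fun y hy => by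
    simpa [hnorm] using hmaps hy
  have := Complex.eqOn_of_isPreconnected_of_isMaxOn_norm hU' hU hf hz hmax hc
  rw [this] at hfc
  exact hfz hfc

theorem Complex.norm_deriv_le_one_sub_sq_norm_of_mapsTo_ball {f : ℂ → ℂ}
    (hf : DifferentiableOn ℂ f (ball 0 1)) (hmaps : MapsTo f (ball 0 1) (ball 0 1)) :
    ‖deriv f 0‖ ≤ 1 - ‖f 0‖ ^ 2 := by
  have h0 : (0 : ℂ) ∈ ball (0 : ℂ) 1 := mem_ball_self one_pos
  have hf0 : ‖f 0‖ < 1 := mem_ball_zero_iff.1 (hmaps h0)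
  have hden : ∀ z ∈ ball (0 : ℂ) 1, 1 - conj (f 0) * f z ≠ 0 := fun z hz => by
    refine sub_ne_zero.2 fun h => (lt_irrefl (1 : ℝ)) ?_
    calc (1 : ℝ) = ‖conj (f 0) * f z‖ := by rw [← h, norm_one]
      _ < 1 := by
        rw [norm_mul, RCLike.norm_conj]
        exact mul_lt_one_of_nonneg_of_lt_one_left (norm_nonneg _) hf0
          (mem_ball_zero_iff.1 (hmaps hz)).le
  -- compose with the disc automorphism sending `f 0` to `0` and apply the Schwarz lemma
  set τ := fun z => (f z - f 0) / (1 - conj (f 0) * f z)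
  have hτ : DifferentiableOn ℂ τ (ball 0 1) :=
    (hf.sub_const _).div ((differentiableOn_const _).sub (hf.const_mul _)) hden
  have hτmaps : MapsTo τ (ball 0 1) (closedBall (τ 0) 1) := fun z hz => by
    simpa [τ] using (norm_sub_div_one_sub_conj_mul_lt_one hf0 (mem_ball_zero_iff.1 (hmaps hz))).le
  have hfd : HasDerivAt f (deriv f 0) 0 :=
    (hf.differentiableAt (isOpen_ball.mem_nhds h0)).hasDerivAt
  have hτd : deriv τ 0 = deriv f 0 / (1 - conj (f 0) * f 0) := by
    rw [((hfd.sub_const _).fun_div ((hfd.const_mul _).const_sub 1) (hden 0 h0)).deriv,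
      sub_self, zero_mul, sub_zero]
    field_simp [hden 0 h0]
  have hpos : 0 < 1 - ‖f 0‖ ^ 2 := by nlinarith [norm_nonneg (f 0)]
  have hconj : 1 - conj (f 0) * f 0 = ((1 - ‖f 0‖ ^ 2 : ℝ) : ℂ) := by
    rw [conj_mul']
    push_cast
    ring
  have := norm_deriv_le_div_of_mapsTo_ball hτ hτmaps one_pos
  rwa [hτd, hconj, norm_div, norm_real, Real.norm_of_nonneg hpos.le, div_one,
    div_le_one hpos] at this

theorem Complex.norm_deriv_le_one_sub_sq_norm_of_mapsTo_closedBall {f : ℂ → ℂ}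
    (hf : DifferentiableOn ℂ f (ball 0 1)) (hmaps : MapsTo f (ball 0 1) (closedBall 0 1)) :
    ‖deriv f 0‖ ≤ 1 - ‖f 0‖ ^ 2 := by
  have h0 : (0 : ℂ) ∈ ball (0 : ℂ) 1 := mem_ball_self one_pos
  rcases (mem_closedBall_zero_iff.1 (hmaps h0)).lt_or_eq with hlt | heq
  · exact norm_deriv_le_one_sub_sq_norm_of_mapsTo_ball hf <|
      mapsTo_ball_of_mapsTo_closedBall isOpen_ball (convex_ball 0 1).isPreconnected hf hmaps h0
        (mem_ball_zero_iff.2 hlt)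
  · have hmax : IsMaxOn (norm ∘ f) (ball 0 1) 0 := fun y hy => by
      simpa [heq] using hmaps hy
    have hconst : f =ᶠ[𝓝 0] fun _ => f 0 :=
      Filter.eventually_of_mem (isOpen_ball.mem_nhds h0) (eq_const_of_exists_max hf h0 hmax)
    rw [hconst.deriv_eq, deriv_const, norm_zero, heq]
    norm_num

theorem Complex.norm_iteratedDeriv_two_le_of_mapsTo_ball {w : ℂ → ℂ}
    (hw : DifferentiableOn ℂ w (ball 0 1)) (hw0 : w 0 = 0)
    (hmaps : MapsTo w (ball 0 1) (ball 0 1)) :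
    ‖iteratedDeriv 2 w 0‖ ≤ 2 * (1 - ‖deriv w 0‖ ^ 2) := by
  have h0 : ball (0 : ℂ) 1 ∈ 𝓝 0 := isOpen_ball.mem_nhds (mem_ball_self one_pos)
  set σ := dslope w 0
  have hσ : DifferentiableOn ℂ σ (ball 0 1) := (differentiableOn_dslope h0).2 hw
  have hσmaps : MapsTo σ (ball 0 1) (closedBall 0 1) := fun z hz => by
    simpa using norm_dslope_le_div_of_mapsTo_ball hw
      (by simpa [hw0] using hmaps.mono_right ball_subset_closedBall) hz
  have hwσ : w = fun z => z * σ z := funext fun z => by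
    simpa [hw0] using (sub_smul_dslope w 0 z).symm
  have hw2 : iteratedDeriv 2 w 0 = 2 * deriv σ 0 := by
    rw [hwσ, iteratedDeriv_succ_fun_id_mul_zero (hσ.analyticAt h0).contDiffAt, iteratedDeriv_one]
    norm_num
  have hw1 : deriv w 0 = σ 0 := (dslope_same w 0).symm
  rw [hw2, hw1, norm_mul, Complex.norm_ofNat]
  gcongr
  exact norm_deriv_le_one_sub_sq_norm_of_mapsTo_closedBall hσ hσmaps

theorem norm_sub_div_add_lt_one_of_re_div_pos {a b : ℂ} (h : 0 < (a / b).re) :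
    ‖(a - b) / (a + b)‖ < 1 := by
  have hb : b ≠ 0 := by rintro rfl; simp at h
  set q := a / b
  have ha : a = q * b := (div_mul_cancel₀ a hb).symm
  have hlt : ‖q - 1‖ < ‖q + 1‖ := by
    refine lt_of_pow_lt_pow_left₀ 2 (norm_nonneg _) ?_
    simp only [← normSq_eq_norm_sq, normSq_apply, sub_re, sub_im, add_re, add_im, one_re, one_im]
    nlinarith
  rw [ha, ← sub_one_mul, ← add_one_mul, norm_div, norm_mul, norm_mul,
    mul_div_mul_right _ _ (norm_ne_zero_iff.2 hb), div_lt_one ((norm_nonneg _).trans_lt hlt)]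
  exact hlt

theorem add_ne_zero_of_re_div_pos {a b : ℂ} (h : 0 < (a / b).re) : a + b ≠ 0 := by
  intro hab
  rw [eq_neg_of_add_eq_zero_left hab] at h
  rcases eq_or_ne b 0 with rfl | hb
  · simp at h
  · simp [neg_div, div_self hb] at h
    linarith

theorem Starlike.re_deriv_div_dslope_pos {G : ℂ → ℂ} (hn : Normalized G) (hs : Starlike G)
    {z : ℂ} (hz : z ∈ unitDisk) : 0 < (deriv G z / dslope G 0 z).re := by
  rcases eq_or_ne z 0 with rfl | hz0
  · simp [hn.2]
  · rw [dslope_of_ne _ hz0, slope_def_field, hn.1, sub_zero, sub_zero, div_div_eq_mul_div,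
      mul_comm]
    exact hs z hz hz0

theorem norm_div_two_add_mul_sq_le_max {c₁ c₂ : ℂ} (h : ‖c₂‖ ≤ 2 * (1 - ‖c₁‖ ^ 2)) (a : ℂ) :
    ‖c₂ / 2 + a * c₁ ^ 2‖ ≤ max 1 ‖a‖ := by
  have ht : ‖c₁‖ ^ 2 ≤ 1 := by nlinarith [norm_nonneg c₂]
  calc ‖c₂ / 2 + a * c₁ ^ 2‖ ≤ ‖c₂‖ / 2 + ‖a‖ * ‖c₁‖ ^ 2 := by
        refine (norm_add_le _ _).trans_eq ?_
        rw [norm_div, norm_mul, norm_pow, Complex.norm_ofNat]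
    _ ≤ 1 * (1 - ‖c₁‖ ^ 2) + ‖a‖ * ‖c₁‖ ^ 2 := by linarith
    _ ≤ max 1 ‖a‖ * (1 - ‖c₁‖ ^ 2) + max 1 ‖a‖ * ‖c₁‖ ^ 2 := by
        gcongr ?_ * _ + ?_ * _
        · exact le_max_left _ _
        · exact le_max_right _ _
    _ = max 1 ‖a‖ := by ring

attribute [local fun_prop] AnalyticAt.contDiffAt AnalyticAt.deriv

theorem fekete_szego_functional_eq_of_eventuallyEq {G h w : ℂ → ℂ} (hG : G = fun z => z * h z)
    (hh : AnalyticAt ℂ h 0) (hw : AnalyticAt ℂ w 0) (hh0 : h 0 = 1) (hw0 : w 0 = 0)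
    (hrel : (fun z => w z * (deriv G z + h z)) =ᶠ[𝓝 0] fun z => deriv G z - h z) (lam : ℂ) :
    iteratedDeriv 3 G 0 / 6 - lam * (iteratedDeriv 2 G 0 / 2) ^ 2 =
      iteratedDeriv 2 w 0 / 2 + (3 - 4 * lam) * deriv w 0 ^ 2 := by
  have hG1 : deriv G 0 = 1 := by
    simpa [hG, hh0] using iteratedDeriv_succ_fun_id_mul_zero (n := 0) hh.contDiffAt
  have hG2 : iteratedDeriv 2 G 0 = 2 * deriv h 0 := by
    simpa [hG, one_add_one_eq_two] using iteratedDeriv_succ_fun_id_mul_zero (n := 1) hh.contDiffAt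
  have hG3 : iteratedDeriv 3 G 0 = 3 * iteratedDeriv 2 h 0 := by
    rw [hG, iteratedDeriv_succ_fun_id_mul_zero hh.contDiffAt]
    norm_num
  -- discharges the analyticity side goals of `deriv G` in the Leibniz expansions below
  have hGa : AnalyticAt ℂ G 0 := hG ▸ by fun_prop
  have e1 := hrel.iteratedDeriv_eq 1
  have e2 := hrel.iteratedDeriv_eq 2
  simp (discharger := fun_prop) only [iteratedDeriv_fun_mul, iteratedDeriv_fun_add,
    iteratedDeriv_fun_sub, Finset.sum_range_succ, ← iteratedDeriv_succ'] at e1 e2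
  norm_num [iteratedDeriv_one, hG1, hG2, hG3, hh0, hw0] at e1 e2
  rw [hG2, hG3]
  linear_combination (lam * (2 * deriv w 0 + deriv h 0) - 3 / 2 * deriv w 0) * e1 - e2 / 4

theorem stmt9_general (G : ℂ → ℂ) (hG : AnalyticOn ℂ G unitDisk) (hn : Normalized G)
    (hs : Starlike G) (lam : ℝ) :
    ‖iteratedDeriv 3 G 0 / 6 - (lam : ℂ) * (iteratedDeriv 2 G 0 / 2) ^ 2‖ ≤
      max 1 |3 - 4 * lam| := by
  have hD : unitDisk ∈ 𝓝 (0 : ℂ) := isOpen_ball.mem_nhds (mem_ball_self one_pos)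
  set h := dslope G 0
  have hh : DifferentiableOn ℂ h unitDisk := (differentiableOn_dslope hD).2 hG.differentiableOn
  have hG' : DifferentiableOn ℂ (deriv G) unitDisk := hG.differentiableOn.deriv isOpen_ball
  have hGh : G = fun z => z * h z := funext fun z => by
    simpa [hn.1] using (sub_smul_dslope G 0 z).symm
  have hpos : ∀ z ∈ unitDisk, 0 < (deriv G z / h z).re := fun _ hz =>
    hs.re_deriv_div_dslope_pos hn hz
  -- the Cayley transform of the Carathéodory function `z G' / G` is a Schwarz function
  set w := fun z => (deriv G z - h z) / (deriv G z + h z)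
  have hden : ∀ z ∈ unitDisk, deriv G z + h z ≠ 0 := fun z hz =>
    add_ne_zero_of_re_div_pos (hpos z hz)
  have hw : DifferentiableOn ℂ w unitDisk := (hG'.sub hh).div (hG'.add hh) hden
  have hw0 : w 0 = 0 := by simp [w, h, hn.2]
  have hwmaps : MapsTo w unitDisk (ball 0 1) := fun z hz =>
    mem_ball_zero_iff.2 (norm_sub_div_add_lt_one_of_re_div_pos (hpos z hz))
  have hrel : (fun z => w z * (deriv G z + h z)) =ᶠ[𝓝 0] fun z => deriv G z - h z :=
    eventually_of_mem hD fun z hz => div_mul_cancel₀ _ (hden z hz)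
  rw [fekete_szego_functional_eq_of_eventuallyEq hGh (hh.analyticAt hD) (hw.analyticAt hD)
    (by simp [h, hn.2]) hw0 hrel]
  have hcoef : ‖(3 - 4 * lam : ℂ)‖ = |3 - 4 * lam| := by
    simpa using norm_real (3 - 4 * lam)
  simpa [hcoef] using norm_div_two_add_mul_sq_le_max
    (norm_iteratedDeriv_two_le_of_mapsTo_ball hw hw0 hwmaps) (3 - 4 * lam : ℂ)

theorem stmt9 (G : ℂ → ℂ) (hG : AnalyticOn ℂ G unitDisk) (hn : Normalized G)
    (hinj : Set.InjOn G unitDisk) (hs : Starlike G) (lam : ℝ) :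
    ‖iteratedDeriv 3 G 0 / 6 - (lam : ℂ) * (iteratedDeriv 2 G 0 / 2) ^ 2‖ ≤
      max 1 |3 - 4 * lam| :=
  stmt9_general G hG hn hs lam
end
end

section
/- Let 0 ≤ μ ≤ λ ≤ 1, -1 ≤ B < A ≤ 1, and let f(z) = z + ∑_{n≥2} a_n z^n be normalized analytic on U. Let g be normalized analytic and starlike of order (k-1)/k, g_k(z) = ∏_{v=0}^{k-1} ε^{-v} g(ε^v z) with ε = exp(2πi/k), and let B_n denote the Taylor coefficients of G_k(z) = g_k(z)/z^{k-1} = z + ∑_{n≥2} B_n z^n. If (1+|B|) ∑_{n≥2} n[1 + (n-1)(λ - μ + nλμ)] |a_n| + (1+|A|) ∑_{n≥2} |B_n| ≤ A - B, then for all z ∈ U: |z f'(z) + z^2 f''(z)(λ-μ+2λμ) + λμ z^3 f'''(z) - G_k(z)| < |A·G_k(z) - B(z f'(z) + z^2 f''(z)(λ-μ+2λμ) + λμ z^3 f'''(z))|, i.e. f ∈ K_s^{(k)}(λ,μ,A,B). -/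
open Complex MeasureTheory

noncomputable section

/-
Both `z f' + (λ - μ + 2λμ) z² f'' + λμ z³ f'''` and `G` are power series `z + ∑_{n ≥ 2} c_n zⁿ`,
with `c_n = n (1 + (n - 1)(λ - μ + nλμ)) a_n` and `c_n = B_n` respectively. For `0 < |z| < 1` the
difference of the two is bounded by `|z|² ∑ (|c_n| + |B_n|)`, while `A G - B (…)` has leading
term `(A - B) z` and a tail bounded by `|z|² ∑ (|A| |B_n| + |B| |c_n|)`. The coefficient
hypothesis together with `|z|² < |z|` gives the strict inequality.
-/

open FormalMultilinearSeries

theorem mem_eball_zero_one_iff {E : Type*} [SeminormedAddCommGroup E] {x : E} :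
    x ∈ Metric.eball (0 : E) 1 ↔ ‖x‖ < 1 := by
  rw [mem_eball_zero_iff, ← ofReal_norm, ENNReal.ofReal_lt_one]

section PowerSeries

variable {𝕜 : Type*} [NontriviallyNormedField 𝕜]

theorem FormalMultilinearSeries.eq_ofScalars_of_coeff {p : FormalMultilinearSeries 𝕜 𝕜 𝕜}
    {c : ℕ → 𝕜} (h : ∀ n, p.coeff n = c n) : p = ofScalars 𝕜 c := by
  ext1 n
  rw [← mkPiRing_coeff_eq p, ← mkPiRing_coeff_eq (ofScalars 𝕜 c), coeff_ofScalars, h]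

variable [CompleteSpace 𝕜] {f : 𝕜 → 𝕜} {a : ℕ → 𝕜} {x : 𝕜} {r : ENNReal}

theorem HasFPowerSeriesOnBall.deriv_ofScalars (h : HasFPowerSeriesOnBall f (ofScalars 𝕜 a) x r) :
    HasFPowerSeriesOnBall (deriv f) (ofScalars 𝕜 fun n => (n + 1) * a (n + 1)) x r := by
  have hderiv : ⇑(ContinuousLinearMap.apply 𝕜 𝕜 (1 : 𝕜)) ∘ fderiv 𝕜 f = deriv f := by
    funext y
    simp
  have hcoeff : ∀ n, ((ContinuousLinearMap.apply 𝕜 𝕜 (1 : 𝕜)).compFormalMultilinearSeries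
      (ofScalars 𝕜 a).derivSeries).coeff n = (n + 1) * a (n + 1) := by
    intro n
    change (ofScalars 𝕜 a).derivSeries.coeff n 1 = _
    rw [derivSeries_coeff_one, coeff_ofScalars, nsmul_eq_mul]
    push_cast
    ring
  rw [← hderiv, ← eq_ofScalars_of_coeff hcoeff]
  exact (ContinuousLinearMap.apply 𝕜 𝕜 (1 : 𝕜)).comp_hasFPowerSeriesOnBall h.fderiv

theorem HasFPowerSeriesOnBall.iteratedDeriv_ofScalars
    (h : HasFPowerSeriesOnBall f (ofScalars 𝕜 a) x r) (j : ℕ) :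
    HasFPowerSeriesOnBall (iteratedDeriv j f)
      (ofScalars 𝕜 fun n => ((n + j).descFactorial j : 𝕜) * a (n + j)) x r := by
  induction j with
  | zero => simpa using h
  | succ j ih =>
    rw [iteratedDeriv_succ]
    convert ih.deriv_ofScalars using 3 with n
    rw [show n + (j + 1) = n + 1 + j by ring, Nat.descFactorial_succ, Nat.add_sub_cancel]
    push_cast
    ring

theorem HasFPowerSeriesOnBall.hasSum_pow_mul_iteratedDeriv
    (h : HasFPowerSeriesOnBall f (ofScalars 𝕜 a) 0 r) (j : ℕ) {z : 𝕜} (hz : z ∈ Metric.eball 0 r) :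
    HasSum (fun n => (n.descFactorial j : 𝕜) * a n * z ^ n) (z ^ j * iteratedDeriv j f z) := by
  have hsum := ((h.iteratedDeriv_ofScalars j).hasSum hz).mul_left (z ^ j)
  simp only [ofScalars_apply_eq, smul_eq_mul, zero_add] at hsum
  rw [← hasSum_nat_add_iff' j]
  have hlow : ∑ n ∈ Finset.range j, (n.descFactorial j : 𝕜) * a n * z ^ n = 0 :=
    Finset.sum_eq_zero fun n hn => by
      rw [Nat.descFactorial_eq_zero_iff_lt.2 (Finset.mem_range.1 hn)]
      simp
  rw [hlow, sub_zero]
  have hterm : (fun n => ((n + j).descFactorial j : 𝕜) * a (n + j) * z ^ (n + j)) =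
      fun n => z ^ j * (((n + j).descFactorial j : 𝕜) * a (n + j) * z ^ n) :=
    funext fun n => by ring
  rwa [hterm]

theorem summable_mul_pow_of_summable_norm (ha : Summable fun n => ‖a n‖) {z : 𝕜} (hz : ‖z‖ ≤ 1) :
    Summable fun n => a n * z ^ n :=
  .of_norm_bounded ha fun n => by
    rw [norm_mul, norm_pow]
    exact mul_le_of_le_one_right (norm_nonneg _) (pow_le_one₀ (norm_nonneg z) hz)

theorem hasFPowerSeriesOnBall_ofScalars_of_summable_norm (ha : Summable fun n => ‖a n‖)
    (hf : ∀ z ∈ Metric.ball (0 : 𝕜) 1, f z = ∑' n, a n * z ^ n) :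
    HasFPowerSeriesOnBall f (ofScalars 𝕜 a) 0 1 := by
  refine ⟨?_, zero_lt_one, fun {z} hz => ?_⟩
  · simpa using (ofScalars 𝕜 a).le_radius_of_summable_norm (r := 1) (by simpa using ha)
  · have hz1 : ‖z‖ < 1 := mem_eball_zero_one_iff.1 hz
    rw [zero_add, hf z (mem_ball_zero_iff.2 hz1)]
    simpa only [ofScalars_apply_eq, smul_eq_mul] using
      (summable_mul_pow_of_summable_norm ha hz1.le).hasSum

end PowerSeries

section CoefficientCriterion

variable {𝕜 : Type*} [NormedField 𝕜]

theorem HasSum.norm_sub_add_mul_le {w : ℕ → 𝕜} {z s : 𝕜} {b : ℕ → ℝ} {S : ℝ}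
    (hw : HasSum (fun n => w n * z ^ n) s) (hb : HasSum b S) (hwb : ∀ n, ‖w (n + 2)‖ ≤ b n)
    (hz : ‖z‖ ≤ 1) : ‖s - (w 0 + w 1 * z)‖ ≤ ‖z‖ ^ 2 * S := by
  have htail := (hasSum_nat_add_iff' 2).2 hw
  rw [Finset.sum_range_succ, Finset.sum_range_one, pow_zero, mul_one, pow_one] at htail
  refine htail.norm_le_of_bounded (hb.mul_left _) fun n => ?_
  rw [norm_mul, norm_pow, mul_comm]
  exact mul_le_mul (pow_le_pow_of_le_one (norm_nonneg z) hz (by omega)) (hwb n) (norm_nonneg _)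
    (by positivity)

theorem norm_sub_lt_norm_of_coeff_tsum_le {𝕜 : Type*} [RCLike 𝕜] {u v : ℕ → 𝕜} {F G z : 𝕜}
    {A B : ℝ}
    (hF : HasSum (fun n => u n * z ^ n) F) (hG : HasSum (fun n => v n * z ^ n) G)
    (hu0 : u 0 = 0) (hu1 : u 1 = 1) (hv0 : v 0 = 0) (hv1 : v 1 = 1)
    (hu : Summable fun n => ‖u (n + 2)‖) (hv : Summable fun n => ‖v (n + 2)‖) (hBA : B < A)
    (hcoeff : (1 + |B|) * ∑' n, ‖u (n + 2)‖ + (1 + |A|) * ∑' n, ‖v (n + 2)‖ ≤ A - B)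
    (hz0 : z ≠ 0) (hz1 : ‖z‖ < 1) :
    ‖F - G‖ < ‖(A : 𝕜) * G - (B : 𝕜) * F‖ := by
  set Su := ∑' n, ‖u (n + 2)‖
  set Sv := ∑' n, ‖v (n + 2)‖
  have hdiff : ‖F - G‖ ≤ ‖z‖ ^ 2 * (Su + Sv) := by
    have hsum : HasSum (fun n => (u n - v n) * z ^ n) (F - G) := by
      simpa only [sub_mul] using hF.sub hG
    simpa [hu0, hu1, hv0, hv1] using
      hsum.norm_sub_add_mul_le (hu.hasSum.add hv.hasSum) (fun n => norm_sub_le _ _) hz1.le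
  have hcomb : ‖(A : 𝕜) * G - (B : 𝕜) * F - ((A : 𝕜) - B) * z‖ ≤
      ‖z‖ ^ 2 * (|A| * Sv + |B| * Su) := by
    have hsum : HasSum (fun n => ((A : 𝕜) * v n - (B : 𝕜) * u n) * z ^ n)
        ((A : 𝕜) * G - (B : 𝕜) * F) := by
      simpa only [sub_mul, mul_assoc] using (hG.mul_left (A : 𝕜)).sub (hF.mul_left (B : 𝕜))
    simpa [hu0, hu1, hv0, hv1] using
      hsum.norm_sub_add_mul_le ((hv.hasSum.mul_left |A|).add (hu.hasSum.mul_left |B|))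
        (fun n => (norm_sub_le _ _).trans_eq (by simp only [norm_mul, RCLike.norm_ofReal]))
        hz1.le
  have hlin : ‖((A : 𝕜) - B) * z‖ = (A - B) * ‖z‖ := by
    rw [← RCLike.ofReal_sub, norm_mul, RCLike.norm_ofReal, abs_of_pos (sub_pos.2 hBA)]
  have htri := norm_sub_norm_le (((A : 𝕜) - B) * z) ((A : 𝕜) * G - (B : 𝕜) * F)
  rw [hlin, norm_sub_rev (((A : 𝕜) - B) * z)] at htri
  have hz_sq : ‖z‖ ^ 2 * (A - B) < ‖z‖ * (A - B) := by
    have hz_pos : 0 < ‖z‖ := norm_pos_iff.2 hz0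
    exact mul_lt_mul_of_pos_right (by nlinarith) (sub_pos.2 hBA)
  have hcoeff_z := mul_le_mul_of_nonneg_left hcoeff (sq_nonneg ‖z‖)
  linarith

end CoefficientCriterion

section DerivCombination

/-- `z^{1-k}` times the numerator in the definition of `K_s^{(k)}(λ, μ, A, B)`. -/
noncomputable def derivCombination (l m : ℝ) (f : ℂ → ℂ) (z : ℂ) : ℂ :=
  z * deriv f z + z ^ 2 * iteratedDeriv 2 f z * ((l : ℂ) - m + 2 * l * m)
    + (l : ℂ) * m * z ^ 3 * iteratedDeriv 3 f z

def derivWeight (l m : ℝ) (n : ℕ) : ℝ := n * (1 + (n - 1) * (l - m + n * l * m))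

theorem one_le_derivWeight {l m : ℝ} (h0 : 0 ≤ m) (hml : m ≤ l) {n : ℕ} (hn : 1 ≤ n) :
    1 ≤ derivWeight l m n := by
  have hn' : (1 : ℝ) ≤ n := by exact_mod_cast hn
  have hlm : 0 ≤ n * l * m := mul_nonneg (mul_nonneg (by linarith) (h0.trans hml)) h0
  have hfactor : 0 ≤ ((n : ℝ) - 1) * (l - m + n * l * m) :=
    mul_nonneg (by linarith) (by linarith)
  unfold derivWeight
  nlinarith

theorem derivWeight_add_two (l m : ℝ) (n : ℕ) :
    derivWeight l m (n + 2) = (n + 2) * (1 + (n + 1) * (l - m + (n + 2) * l * m)) := by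
  rw [derivWeight]
  push_cast
  ring

theorem HasFPowerSeriesOnBall.hasSum_derivCombination {f : ℂ → ℂ} {a : ℕ → ℂ} {r : ENNReal}
    (h : HasFPowerSeriesOnBall f (ofScalars ℂ a) 0 r) (l m : ℝ) {z : ℂ}
    (hz : z ∈ Metric.eball 0 r) :
    HasSum (fun n => (derivWeight l m n : ℂ) * a n * z ^ n) (derivCombination l m f z) := by
  have h1 := h.hasSum_pow_mul_iteratedDeriv 1 hz
  have h2 := (h.hasSum_pow_mul_iteratedDeriv 2 hz).mul_right ((l : ℂ) - m + 2 * l * m)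
  have h3 := (h.hasSum_pow_mul_iteratedDeriv 3 hz).mul_left ((l : ℂ) * m)
  rw [iteratedDeriv_one, pow_one] at h1
  have hvalue : derivCombination l m f z = z * deriv f z
      + z ^ 2 * iteratedDeriv 2 f z * ((l : ℂ) - m + 2 * l * m)
      + (l : ℂ) * m * (z ^ 3 * iteratedDeriv 3 f z) := by
    unfold derivCombination
    ring
  rw [hvalue]
  -- `derivWeight l m n = n + (l - m + 2lm) n (n - 1) + lm n (n - 1) (n - 2)`
  refine ((h1.add h2).add h3).congr_fun fun n => ?_
  rcases n with _ | _ | n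
  · simp [derivWeight]
  · simp [derivWeight]
  · simp only [Nat.descFactorial_succ, Nat.descFactorial_zero, derivWeight]
    push_cast
    ring

end DerivCombination

theorem stmt10_general (l m A B : ℝ)
    (h0 : 0 ≤ m) (hml : m ≤ l) (hBA : B < A)
    (f : ℂ → ℂ) (a : ℕ → ℂ)
    (ha : ∀ z ∈ unitDisk, f z = ∑' n : ℕ, a n * z ^ n) (ha0 : a 0 = 0) (ha1 : a 1 = 1)
    (G : ℂ → ℂ) (Bc : ℕ → ℂ)
    (hBcs : ∀ z ∈ unitDisk, G z = ∑' n : ℕ, Bc n * z ^ n) (hBc0 : Bc 0 = 0) (hBc1 : Bc 1 = 1)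
    (hsa : Summable (fun n : ℕ => ((n + 2 : ℝ)) * (1 + (n + 1 : ℝ) * (l - m + (n + 2 : ℝ) * l * m)) * ‖a (n + 2)‖))
    (hsB : Summable (fun n : ℕ => ‖Bc (n + 2)‖))
    (hineq : (1 + |B|) * (∑' n : ℕ, ((n + 2 : ℝ)) * (1 + (n + 1 : ℝ) * (l - m + (n + 2 : ℝ) * l * m)) * ‖a (n + 2)‖)
        + (1 + |A|) * (∑' n : ℕ, ‖Bc (n + 2)‖) ≤ A - B) :
    ∀ z ∈ unitDisk, z ≠ 0 →
      ‖z * deriv f z + z ^ 2 * iteratedDeriv 2 f z * ((l : ℂ) - m + 2 * l * m)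
          + (l : ℂ) * m * z ^ 3 * iteratedDeriv 3 f z - G z‖ <
      ‖(A : ℂ) * G z - (B : ℂ) * (z * deriv f z + z ^ 2 * iteratedDeriv 2 f z * ((l : ℂ) - m + 2 * l * m)
          + (l : ℂ) * m * z ^ 3 * iteratedDeriv 3 f z)‖ := by
  intro z hz hz0
  simp only [← derivWeight_add_two] at hsa hineq
  have hw : ∀ n, 1 ≤ derivWeight l m (n + 2) := fun n => one_le_derivWeight h0 hml (by omega)
  have hnorm : ∀ n, ‖(derivWeight l m (n + 2) : ℂ) * a (n + 2)‖ =
      derivWeight l m (n + 2) * ‖a (n + 2)‖ := fun n => by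
    rw [norm_mul, Complex.norm_real, Real.norm_of_nonneg (zero_le_one.trans (hw n))]
  have ha_norm : Summable fun n => ‖a n‖ :=
    (summable_nat_add_iff 2).1 (hsa.of_nonneg_of_le (fun _ => norm_nonneg _)
      fun n => le_mul_of_one_le_left (norm_nonneg _) (hw n))
  have hz1 : ‖z‖ < 1 := mem_ball_zero_iff.1 hz
  have hF := (hasFPowerSeriesOnBall_ofScalars_of_summable_norm ha_norm ha).hasSum_derivCombination
    l m (mem_eball_zero_one_iff.2 hz1)
  have hG : HasSum (fun n => Bc n * z ^ n) (G z) := by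
    rw [hBcs z hz]
    exact (summable_mul_pow_of_summable_norm ((summable_nat_add_iff 2).1 hsB) hz1.le).hasSum
  exact norm_sub_lt_norm_of_coeff_tsum_le hF hG (by simp [ha0]) (by simp [ha1, derivWeight])
    hBc0 hBc1 (by simpa only [hnorm] using hsa) hsB hBA (by simpa only [hnorm] using hineq) hz0 hz1

theorem stmt10 (k : ℕ) (hk : 1 ≤ k) (l m A B : ℝ)
    (h0 : 0 ≤ m) (hml : m ≤ l) (hl : l ≤ 1) (hB : -1 ≤ B) (hBA : B < A) (hA : A ≤ 1)
    (f : ℂ → ℂ) (a : ℕ → ℂ) (hf : AnalyticOn ℂ f unitDisk)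
    (ha : ∀ z ∈ unitDisk, f z = ∑' n : ℕ, a n * z ^ n) (ha0 : a 0 = 0) (ha1 : a 1 = 1)
    (g : ℂ → ℂ) (hg : AnalyticOn ℂ g unitDisk) (hgn : Normalized g)
    (hgs : StarlikeOfOrder ((k - 1 : ℝ) / k) g)
    (G : ℂ → ℂ) (Bc : ℕ → ℂ) (hG : AnalyticOn ℂ G unitDisk)
    (hGk : ∀ z ∈ unitDisk, z ≠ 0 → G z = gk k g z / z ^ (k - 1))
    (hBcs : ∀ z ∈ unitDisk, G z = ∑' n : ℕ, Bc n * z ^ n) (hBc0 : Bc 0 = 0) (hBc1 : Bc 1 = 1)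
    (hsa : Summable (fun n : ℕ => ((n + 2 : ℝ)) * (1 + (n + 1 : ℝ) * (l - m + (n + 2 : ℝ) * l * m)) * ‖a (n + 2)‖))
    (hsB : Summable (fun n : ℕ => ‖Bc (n + 2)‖))
    (hineq : (1 + |B|) * (∑' n : ℕ, ((n + 2 : ℝ)) * (1 + (n + 1 : ℝ) * (l - m + (n + 2 : ℝ) * l * m)) * ‖a (n + 2)‖)
        + (1 + |A|) * (∑' n : ℕ, ‖Bc (n + 2)‖) ≤ A - B) :
    ∀ z ∈ unitDisk, z ≠ 0 →
      ‖z * deriv f z + z ^ 2 * iteratedDeriv 2 f z * ((l : ℂ) - m + 2 * l * m)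
          + (l : ℂ) * m * z ^ 3 * iteratedDeriv 3 f z - G z‖ <
      ‖(A : ℂ) * G z - (B : ℂ) * (z * deriv f z + z ^ 2 * iteratedDeriv 2 f z * ((l : ℂ) - m + 2 * l * m)
          + (l : ℂ) * m * z ^ 3 * iteratedDeriv 3 f z)‖ :=
  stmt10_general l m A B h0 hml hBA f a ha ha0 ha1 G Bc hBcs hBc0 hBc1 hsa hsB hineq
end
end

section
/- Let -1 ≤ B < A ≤ 1 and let f(z) = z + ∑_{n≥2} a_n z^n be normalized analytic on U. With B_n the coefficients of G_k(z) = g_k(z)/z^{k-1} for g starlike of order (k-1)/k, if (1+|B|) ∑_{n≥2} n|a_n| + (1+|A|) ∑_{n≥2} |B_n| ≤ A - B, then |z f'(z) - G_k(z)| < |A·G_k(z) - B z f'(z)| for all z ∈ U, i.e. z f'(z)/G_k(z) is subordinate to (1+Az)/(1+Bz). -/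
open Complex MeasureTheory

noncomputable section

/-! Writing `z f'(z) = z + z² F(z)` and `G(z) = z + z² H(z)`, the coefficient sums `S₁, S₂` bound
`|F|` and `|H|` on the disk. Hence `|z f' - G| ≤ |z|² (S₁ + S₂)`, while
`|A G - B z f'| ≥ (A - B) |z| - |z|² (|B| S₁ + |A| S₂)`; the coefficient condition and
`|z|² < |z|` make the first bound strictly smaller than the second. -/

section PowerSeries

variable {𝕜 : Type*}

theorem summable_and_norm_tsum_mul_pow_le [NormedField 𝕜] [CompleteSpace 𝕜] {c : ℕ → 𝕜}
    (hc : Summable fun n => ‖c n‖) {z : 𝕜} (hz : ‖z‖ ≤ 1) :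
    Summable (fun n => c n * z ^ n) ∧ ‖∑' n, c n * z ^ n‖ ≤ ∑' n, ‖c n‖ := by
  have hle (n : ℕ) : ‖c n * z ^ n‖ ≤ ‖c n‖ := by
    rw [norm_mul, norm_pow]
    exact mul_le_of_le_one_right (norm_nonneg _) (pow_le_one₀ (norm_nonneg _) hz)
  exact ⟨.of_norm_bounded hc hle, tsum_of_norm_bounded hc.hasSum hle⟩

theorem norm_tsum_mul_pow_sub_self_le [NormedField 𝕜] [CompleteSpace 𝕜] {c : ℕ → 𝕜}
    (h0 : c 0 = 0) (h1 : c 1 = 1) (hc : Summable fun n => ‖c (n + 2)‖) {z : 𝕜} (hz : ‖z‖ ≤ 1) :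
    ‖∑' n, c n * z ^ n - z‖ ≤ ‖z‖ ^ 2 * ∑' n, ‖c (n + 2)‖ := by
  obtain ⟨hs, -⟩ := summable_and_norm_tsum_mul_pow_le ((summable_nat_add_iff 2).1 hc) hz
  obtain ⟨-, htail⟩ := summable_and_norm_tsum_mul_pow_le hc hz
  have hsplit : ∑' n, c n * z ^ n - z = z ^ 2 * ∑' n, c (n + 2) * z ^ n := by
    rw [← hs.sum_add_tsum_nat_add 2, ← tsum_mul_left]
    simp only [Finset.sum_range_succ, Finset.sum_range_zero, h0, h1, zero_mul, one_mul, pow_one,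
      zero_add, add_sub_cancel_left]
    congr 1 with n
    ring
  rw [hsplit, norm_mul, norm_pow]
  gcongr

theorem hasDerivAt_tsum_mul_pow [RCLike 𝕜] {a : ℕ → 𝕜} (ha : Summable fun n => n * ‖a n‖)
    {z : 𝕜} (hz : ‖z‖ < 1) :
    HasDerivAt (fun w => ∑' n, a n * w ^ n) (∑' n, a n * (n * z ^ (n - 1))) z := by
  have hsum0 : Summable fun n => a n * (0 : 𝕜) ^ n :=
    summable_of_ne_finset_zero (s := {0}) fun n hn => by simp_all
  refine hasDerivAt_tsum_of_isPreconnected ha Metric.isOpen_ball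
    (convex_ball (0 : 𝕜) 1).isPreconnected
    (fun n y _ => (hasDerivAt_pow n y).const_mul (a n)) (fun n y hy => ?_)
    (Metric.mem_ball_self one_pos) hsum0 (mem_ball_zero_iff.2 hz)
  rw [mem_ball_zero_iff] at hy
  rw [norm_mul, norm_mul, norm_pow, RCLike.norm_natCast, ← mul_assoc, mul_comm ‖a n‖]
  exact mul_le_of_le_one_right (by positivity) (pow_le_one₀ (norm_nonneg y) hy.le)

theorem mul_deriv_eq_tsum [RCLike 𝕜] {f : 𝕜 → 𝕜} {a : ℕ → 𝕜}
    (hf : ∀ w ∈ Metric.ball (0 : 𝕜) 1, f w = ∑' n, a n * w ^ n)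
    (ha : Summable fun n => n * ‖a n‖) {z : 𝕜} (hz : ‖z‖ < 1) :
    z * deriv f z = ∑' n, n * a n * z ^ n := by
  have hfeq : f =ᶠ[nhds z] fun w => ∑' n, a n * w ^ n :=
    Filter.eventuallyEq_of_mem (Metric.isOpen_ball.mem_nhds (mem_ball_zero_iff.2 hz)) hf
  rw [hfeq.deriv_eq, (hasDerivAt_tsum_mul_pow ha hz).deriv, ← tsum_mul_left]
  congr 1 with (_ | n)
  · simp
  · rw [Nat.add_sub_cancel, pow_succ]
    ring

end PowerSeries

theorem norm_sub_lt_norm_smul_sub_smul {E : Type*} [NormedAddCommGroup E] [NormedSpace ℝ E]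
    {A B S₁ S₂ : ℝ} (hBA : B < A) (hS : (1 + |B|) * S₁ + (1 + |A|) * S₂ ≤ A - B)
    {z u v : E} (hz0 : z ≠ 0) (hz : ‖z‖ < 1)
    (hu : ‖u - z‖ ≤ ‖z‖ ^ 2 * S₁) (hv : ‖v - z‖ ≤ ‖z‖ ^ 2 * S₂) :
    ‖u - v‖ < ‖A • v - B • u‖ := by
  have hlhs : ‖u - v‖ ≤ ‖u - z‖ + ‖v - z‖ := norm_sub_le_norm_sub_add_norm_sub u z v |>.trans
    (by rw [norm_sub_rev v z])
  have hrhs : (A - B) * ‖z‖ - (|A| * ‖v - z‖ + |B| * ‖u - z‖) ≤ ‖A • v - B • u‖ := by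
    set w := A • (v - z) - B • (u - z)
    have hsplit : A • v - B • u = (A - B) • z + w := by
      simp only [w, smul_sub, sub_smul]; abel
    have hmain : ‖(A - B) • z‖ = (A - B) * ‖z‖ := by
      rw [norm_smul, Real.norm_of_nonneg (sub_nonneg.2 hBA.le)]
    have hpert : ‖w‖ ≤ |A| * ‖v - z‖ + |B| * ‖u - z‖ := by
      simpa only [norm_smul, Real.norm_eq_abs] using norm_sub_le (A • (v - z)) (B • (u - z))
    have htri : ‖(A - B) • z‖ ≤ ‖(A - B) • z + w‖ + ‖w‖ := by
      simpa only [add_sub_cancel_right] using norm_sub_le ((A - B) • z + w) w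
    rw [hsplit]
    linarith
  have hr : 0 < ‖z‖ := norm_pos_iff.2 hz0
  have hsq : ‖z‖ ^ 2 * (A - B) < ‖z‖ * (A - B) :=
    mul_lt_mul_of_pos_right (by nlinarith) (by linarith)
  nlinarith [mul_le_mul_of_nonneg_left hS (sq_nonneg ‖z‖), abs_nonneg A, abs_nonneg B,
    norm_nonneg (u - z), norm_nonneg (v - z)]

theorem stmt11_general (A B : ℝ)
    (hBA : B < A)
    (f : ℂ → ℂ) (a : ℕ → ℂ)
    (ha : ∀ z ∈ unitDisk, f z = ∑' n : ℕ, a n * z ^ n) (ha1 : a 1 = 1)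
    (G : ℂ → ℂ) (Bc : ℕ → ℂ)
    (hBcs : ∀ z ∈ unitDisk, G z = ∑' n : ℕ, Bc n * z ^ n) (hBc0 : Bc 0 = 0) (hBc1 : Bc 1 = 1)
    (hsa : Summable (fun n : ℕ => ((n + 2 : ℝ)) * ‖a (n + 2)‖))
    (hsB : Summable (fun n : ℕ => ‖Bc (n + 2)‖))
    (hineq : (1 + |B|) * (∑' n : ℕ, ((n + 2 : ℝ)) * ‖a (n + 2)‖)
        + (1 + |A|) * (∑' n : ℕ, ‖Bc (n + 2)‖) ≤ A - B) :
    ∀ z ∈ unitDisk, z ≠ 0 →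
      ‖z * deriv f z - G z‖ < ‖(A : ℂ) * G z - (B : ℂ) * (z * deriv f z)‖ := by
  intro z hz hz0
  have hr : ‖z‖ < 1 := mem_ball_zero_iff.1 hz
  have hcoef : (fun n : ℕ => ‖((n + 2 : ℕ) : ℂ) * a (n + 2)‖) =
      fun n : ℕ => (n + 2 : ℝ) * ‖a (n + 2)‖ := by
    funext n
    rw [norm_mul, Complex.norm_natCast]
    push_cast
    ring
  have hna : Summable fun n : ℕ => (n : ℝ) * ‖a n‖ :=
    (summable_nat_add_iff 2).1 (by simpa only [Nat.cast_add, Nat.cast_ofNat] using hsa)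
  have hderiv : ‖z * deriv f z - z‖ ≤ ‖z‖ ^ 2 * ∑' n : ℕ, (n + 2 : ℝ) * ‖a (n + 2)‖ := by
    rw [mul_deriv_eq_tsum ha hna hr, ← hcoef]
    exact norm_tsum_mul_pow_sub_self_le (c := fun n => (n : ℂ) * a n) (by simp) (by simp [ha1])
      (hcoef ▸ hsa) hr.le
  have hGz : ‖G z - z‖ ≤ ‖z‖ ^ 2 * ∑' n : ℕ, ‖Bc (n + 2)‖ :=
    hBcs z hz ▸ norm_tsum_mul_pow_sub_self_le hBc0 hBc1 hsB hr.le
  simpa only [Complex.real_smul] using norm_sub_lt_norm_smul_sub_smul hBA hineq hz0 hr hderiv hGz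

theorem stmt11 (k : ℕ) (hk : 1 ≤ k) (A B : ℝ)
    (hB : -1 ≤ B) (hBA : B < A) (hA : A ≤ 1)
    (f : ℂ → ℂ) (a : ℕ → ℂ) (hf : AnalyticOn ℂ f unitDisk)
    (ha : ∀ z ∈ unitDisk, f z = ∑' n : ℕ, a n * z ^ n) (ha0 : a 0 = 0) (ha1 : a 1 = 1)
    (g : ℂ → ℂ) (hg : AnalyticOn ℂ g unitDisk) (hgn : Normalized g)
    (hgs : StarlikeOfOrder ((k - 1 : ℝ) / k) g)
    (G : ℂ → ℂ) (Bc : ℕ → ℂ) (hG : AnalyticOn ℂ G unitDisk)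
    (hGk : ∀ z ∈ unitDisk, z ≠ 0 → G z = gk k g z / z ^ (k - 1))
    (hBcs : ∀ z ∈ unitDisk, G z = ∑' n : ℕ, Bc n * z ^ n) (hBc0 : Bc 0 = 0) (hBc1 : Bc 1 = 1)
    (hsa : Summable (fun n : ℕ => ((n + 2 : ℝ)) * ‖a (n + 2)‖))
    (hsB : Summable (fun n : ℕ => ‖Bc (n + 2)‖))
    (hineq : (1 + |B|) * (∑' n : ℕ, ((n + 2 : ℝ)) * ‖a (n + 2)‖)
        + (1 + |A|) * (∑' n : ℕ, ‖Bc (n + 2)‖) ≤ A - B) :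
    ∀ z ∈ unitDisk, z ≠ 0 →
      ‖z * deriv f z - G z‖ < ‖(A : ℂ) * G z - (B : ℂ) * (z * deriv f z)‖ :=
  stmt11_general A B hBA f a ha ha1 G Bc hBcs hBc0 hBc1 hsa hsB hineq
end
end

section
/- Every normalized convex function f on U is starlike of order 1/2, i.e. if f is analytic, normalized, and Re(1 + z f''(z)/f'(z)) > 0 on U, then Re(z f'(z)/f(z)) > 1/2 for all nonzero z ∈ U. Moreover the converse fails: the function f(z) = z - z^2/3 is starlike of order 1/2 on U but not convex. -/
open Complex MeasureTheory

noncomputable section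

/-!
Convexity first forces `f' ≠ 0` on the disc: near a zero `z₀` of `f'` of order `n ≥ 1`,
`1 + z f''/f' ≈ n z / (z - z₀)`, whose real part tends to `-∞` as `z → z₀` along the radius.
Hence `w = f / (z f') - 1` is holomorphic on the disc with `w 0 = 0`, and `z f'/f = 1 / (1 + w)`
has real part `> 1/2` wherever `|w| < 1`. If `|w|` reached `1`, Jack's lemma would give a point
`z₀` with `|w z₀| = 1` and `z₀ w'(z₀) = k w(z₀)`, `k ≥ 1` real: take `|z₀|` minimal, apply
Schwarz's lemma on the disc of radius `|z₀|`, and read off the boundary derivative at `z₀`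
radially and tangentially. Differentiating `f = z f' (1 + w)` then gives
`1 + z₀ f''/f' = (1 - k w)/(1 + w)`, whose real part is `≤ 0` on `|w| = 1`.

For `z - z²/3` one has `z f'/f = 1 / (1 + z / (3 - 2z))` with `|z / (3 - 2z)| < 1`, while
`1 + z f''/f' = -1/2` at `z = 9/10`.
-/

open Metric Filter Set Topology

theorem exists_real_deriv_ge_one_of_norm_le_norm {φ : ℂ → ℂ} (hφ : DifferentiableAt ℂ φ 1)
    (h_le : ∀ ζ : ℂ, ‖ζ‖ ≤ 1 → ‖φ ζ‖ ≤ ‖ζ‖) (h_one : φ 1 = 1) :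
    ∃ k : ℝ, 1 ≤ k ∧ deriv φ 1 = k := by
  have h_re : ∀ ζ : ℂ, ‖ζ‖ ≤ 1 → (φ ζ).re ≤ ‖ζ‖ := fun ζ hζ => (re_le_norm _).trans (h_le ζ hζ)
  have hφ' : HasDerivAt φ (deriv φ 1) ((1 : ℝ) : ℂ) := by simpa using hφ.hasDerivAt
  have h_im : (deriv φ 1).im = 0 := by
    have h_circle : HasDerivAt (fun θ : ℝ => (φ (exp (θ * I))).re) (deriv φ 1 * I).re 0 := by
      have := hφ'.comp_of_eq ((0 : ℝ) : ℂ) ((hasDerivAt_id _).mul_const I).cexp (by simp)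
      simpa using this.real_of_complex
    have h_max : IsLocalMax (fun θ : ℝ => (φ (exp (θ * I))).re) 0 :=
      Eventually.of_forall fun θ => by
        simpa [h_one, norm_exp_ofReal_mul_I] using h_re _ (norm_exp_ofReal_mul_I θ).le
    simpa using h_max.hasDerivAt_eq_zero h_circle
  have h_re_ge : 1 ≤ (deriv φ 1).re := by
    have h_radial : HasDerivAt (fun t : ℝ => (φ t).re - t) ((deriv φ 1).re - 1) 1 :=
      hφ'.real_of_complex.sub (hasDerivAt_id _)
    have h_max : IsLocalMaxOn (fun t : ℝ => (φ t).re - t) (Icc 0 1) 1 :=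
      eventually_of_mem self_mem_nhdsWithin fun t ht => by
        simpa [h_one, abs_of_nonneg ht.1] using h_re t (by simpa [abs_of_nonneg ht.1] using ht.2)
    have h_seg : segment ℝ (1 : ℝ) 0 ⊆ Icc 0 1 := by rw [segment_symm, segment_eq_Icc zero_le_one]
    simpa using h_max.hasFDerivWithinAt_nonpos h_radial.hasFDerivAt.hasFDerivWithinAt
      (sub_mem_posTangentConeAt_of_segment_subset h_seg)
  exact ⟨(deriv φ 1).re, h_re_ge, Complex.ext (by simp) (by simp [h_im])⟩

theorem exists_norm_minimal_of_le_norm {E F : Type*} [NormedAddCommGroup E] [ProperSpace E]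
    [SeminormedAddCommGroup F] {w : E → F} {R c : ℝ} (hw : ContinuousOn w (ball 0 R)) {z₁ : E}
    (hz₁ : z₁ ∈ ball 0 R) (h₁ : c ≤ ‖w z₁‖) :
    ∃ z₀ ∈ ball (0 : E) R, c ≤ ‖w z₀‖ ∧ ∀ z : E, ‖z‖ < ‖z₀‖ → ‖w z‖ < c := by
  have hK : closedBall (0 : E) ‖z₁‖ ⊆ ball 0 R := closedBall_subset_ball (mem_ball_zero_iff.mp hz₁)
  set S := closedBall (0 : E) ‖z₁‖ ∩ w ⁻¹' {y | c ≤ ‖y‖}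
  have hS : IsCompact S :=
    (isCompact_closedBall _ _).of_isClosed_subset ((hw.mono hK).preimage_isClosed_of_isClosed
      isClosed_closedBall (isClosed_le continuous_const continuous_norm)) inter_subset_left
  obtain ⟨z₀, hz₀S, hmin⟩ :=
    hS.exists_isMinOn ⟨z₁, mem_closedBall_zero_iff.mpr le_rfl, h₁⟩ continuous_norm.continuousOn
  refine ⟨z₀, hK hz₀S.1, hz₀S.2, fun z hz => ?_⟩
  by_contra! h
  have hzK : z ∈ closedBall (0 : E) ‖z₁‖ :=
    mem_closedBall_zero_iff.mpr (hz.le.trans (mem_closedBall_zero_iff.mp hz₀S.1))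
  exact (hmin ⟨hzK, h⟩).not_gt hz

theorem norm_le_norm_div_of_norm_lt_one {w : ℂ → ℂ} {r : ℝ} (hr : 0 < r)
    (hd : DifferentiableOn ℂ w (ball 0 r)) (hc : ContinuousOn w (closedBall 0 r)) (h₀ : w 0 = 0)
    (h_lt : ∀ z : ℂ, ‖z‖ < r → ‖w z‖ < 1) {z : ℂ} (hz : ‖z‖ ≤ r) : ‖w z‖ ≤ ‖z‖ / r := by
  have h_ball : ∀ ζ ∈ ball (0 : ℂ) r, ‖w ζ‖ ≤ ‖ζ‖ / r := fun ζ hζ => by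
    have h_maps : MapsTo w (ball 0 r) (closedBall (w 0) 1) := fun ξ hξ => by
      simpa [h₀] using (h_lt ξ (mem_ball_zero_iff.mp hξ)).le
    simpa [h₀, div_eq_inv_mul] using Complex.dist_le_div_mul_dist_of_mapsTo_ball hd h_maps hζ
  have hzr : z ∈ closedBall (0 : ℂ) r := mem_closedBall_zero_iff.mpr hz
  refine ContinuousWithinAt.closure_le (by rwa [closure_ball _ hr.ne'])
    ((hc z hzr).mono ball_subset_closedBall).norm ?_ h_ball
  exact (continuous_norm.div_const r).continuousWithinAt

theorem exists_mul_deriv_eq_real_mul_of_one_le_norm {w : ℂ → ℂ}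
    (hw : DifferentiableOn ℂ w (ball 0 1)) (h₀ : w 0 = 0) {z₁ : ℂ} (hz₁ : z₁ ∈ ball (0 : ℂ) 1)
    (h₁ : 1 ≤ ‖w z₁‖) :
    ∃ z₀ ∈ ball (0 : ℂ) 1, ‖w z₀‖ = 1 ∧ ∃ k : ℝ, 1 ≤ k ∧ z₀ * deriv w z₀ = k * w z₀ := by
  obtain ⟨z₀, hz₀, h_ge, h_lt⟩ := exists_norm_minimal_of_le_norm hw.continuousOn hz₁ h₁
  have hr : 0 < ‖z₀‖ := norm_pos_iff.mpr <| by rintro rfl; norm_num [h₀] at h_ge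
  have hz₀' : ‖z₀‖ < 1 := mem_ball_zero_iff.mp hz₀
  have h_schwarz : ∀ z : ℂ, ‖z‖ ≤ ‖z₀‖ → ‖w z‖ ≤ ‖z‖ / ‖z₀‖ := fun z =>
    norm_le_norm_div_of_norm_lt_one hr (hw.mono (ball_subset_ball hz₀'.le))
      (hw.continuousOn.mono (closedBall_subset_ball hz₀')) h₀ h_lt
  have h_one : ‖w z₀‖ = 1 := le_antisymm (by simpa [hr.ne'] using h_schwarz z₀ le_rfl) h_ge
  have h_conj : starRingEnd ℂ (w z₀) * w z₀ = 1 := by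
    rw [mul_comm, mul_conj, normSq_eq_norm_sq, h_one]; norm_num
  set φ : ℂ → ℂ := fun ζ => starRingEnd ℂ (w z₀) * w (z₀ * ζ)
  have hφ : HasDerivAt φ (starRingEnd ℂ (w z₀) * (deriv w z₀ * z₀)) 1 := by
    have hwd : HasDerivAt w (deriv w z₀) (z₀ * 1) := by
      simpa using (hw.differentiableAt (isOpen_ball.mem_nhds hz₀)).hasDerivAt
    exact (hwd.comp 1 ((hasDerivAt_id 1).const_mul z₀) |>.const_mul _).congr_deriv (by simp)
  obtain ⟨k, hk, hk_eq⟩ := exists_real_deriv_ge_one_of_norm_le_norm hφ.differentiableAt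
    (fun ζ hζ => by
      simpa [φ, norm_mul, h_one, hr.ne'] using
        h_schwarz (z₀ * ζ) (by simpa [norm_mul] using mul_le_of_le_one_right hr.le hζ))
    (by simpa [φ] using h_conj)
  refine ⟨z₀, hz₀, h_one, k, hk, ?_⟩
  rw [hφ.deriv] at hk_eq
  linear_combination w z₀ * hk_eq - z₀ * deriv w z₀ * h_conj

theorem AnalyticAt.tendsto_sub_mul_deriv_div {F : ℂ → ℂ} {z₀ : ℂ} {n : ℕ}
    (hF : AnalyticAt ℂ F z₀) (hn : analyticOrderAt F z₀ = n) :
    Tendsto (fun z => (z - z₀) * deriv F z / F z) (𝓝[≠] z₀) (𝓝 n) := by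
  obtain ⟨g, hg, hg₀, hFg⟩ := hF.analyticOrderAt_eq_natCast.mp hn
  have h_eq : ∀ᶠ z in 𝓝[≠] z₀, (z - z₀) * deriv F z / F z = n + (z - z₀) * deriv g z / g z := by
    have h_near : ∀ᶠ z in 𝓝 z₀, (F =ᶠ[𝓝 z] fun ζ => (ζ - z₀) ^ n * g ζ) ∧ g z ≠ 0 ∧
        DifferentiableAt ℂ g z := by
      filter_upwards [hFg.eventually_nhds, hg.continuousAt.eventually_ne hg₀,
        hg.eventually_analyticAt] with z hFz hgz hgz'
      exact ⟨hFz, hgz, hgz'.differentiableAt⟩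
    filter_upwards [nhdsWithin_le_nhds h_near, self_mem_nhdsWithin] with z ⟨hFz, hgz, hgd⟩ hz
    have hz' : z - z₀ ≠ 0 := sub_ne_zero.mpr hz
    have hd : HasDerivAt (fun ζ => (ζ - z₀) ^ n * g ζ)
        (n * (z - z₀) ^ (n - 1) * g z + (z - z₀) ^ n * deriv g z) z := by
      simpa using (((hasDerivAt_id z).sub_const z₀).fun_pow n).fun_mul hgd.hasDerivAt
    rw [hFz.deriv_eq, hd.deriv, hFz.eq_of_nhds]
    rcases n with _ | n
    · field_simp; simp
    · simp only [Nat.add_sub_cancel]; field_simp; ring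
  have h_lim : Tendsto (fun z => n + (z - z₀) * deriv g z / g z) (𝓝 z₀) (𝓝 n) := by
    have : ContinuousAt (fun z => n + (z - z₀) * deriv g z / g z) z₀ :=
      continuousAt_const.add (((continuousAt_id.sub continuousAt_const).mul
        hg.deriv.continuousAt).div hg.continuousAt hg₀)
    simpa using this.tendsto
  exact (h_lim.mono_left nhdsWithin_le_nhds).congr' (h_eq.mono fun z hz => hz.symm)

theorem exists_re_one_add_mul_deriv_div_neg {F : ℂ → ℂ} {R : ℝ}
    (hF : AnalyticOnNhd ℂ F (ball 0 R)) (hF₀ : F 0 ≠ 0) {z₀ : ℂ} (hz₀ : z₀ ∈ ball (0 : ℂ) R)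
    (hFz₀ : F z₀ = 0) : ∃ z ∈ ball (0 : ℂ) R, (1 + z * deriv F z / F z).re < 0 := by
  have hz₀0 : z₀ ≠ 0 := by rintro rfl; exact hF₀ hFz₀
  have h_order : analyticOrderAt F z₀ ≠ ⊤ := fun h => hF₀ <|
    hF.eqOn_zero_of_preconnected_of_eventuallyEq_zero (convex_ball _ _).isPreconnected hz₀
      (analyticOrderAt_eq_top.mp h) (mem_ball_self (pos_of_mem_ball hz₀))
  obtain ⟨n, hn⟩ := ENat.ne_top_iff_exists.mp h_order
  have hn_pos : (1 : ℝ) ≤ n := by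
    refine Nat.one_le_cast.mpr (Nat.pos_iff_ne_zero.mpr ?_); rintro rfl
    exact (hF z₀ hz₀).analyticOrderAt_eq_zero.mp hn.symm hFz₀
  have h_ray : Tendsto (fun s : ℝ => (s : ℂ) * z₀) (𝓝[<] 1) (𝓝[≠] z₀) := by
    refine tendsto_nhdsWithin_iff.mpr ⟨?_, eventually_nhdsWithin_of_forall fun s hs => ?_⟩
    · have : Continuous fun s : ℝ => (s : ℂ) * z₀ := by fun_prop
      simpa using this.continuousAt (x := 1) |>.tendsto.mono_left nhdsWithin_le_nhds
    · simpa [hz₀0] using hs.ne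
  have h_lim := (continuous_re.tendsto _).comp ((hF z₀ hz₀).tendsto_sub_mul_deriv_div hn.symm)
  -- at `z = s z₀`, `1 + z F'/F = 1 + s / (s - 1) * ((z - z₀) F'/F)`: negative once the last factor
  -- has real part `> 1/2` and `s > 2/3`
  have h_near : ∀ᶠ s : ℝ in 𝓝[<] 1, s ∈ Ioo (2 / 3) 1 ∧
      1 / 2 < ((s * z₀ - z₀) * deriv F (s * z₀) / F (s * z₀)).re := by
    have h_half : (1 / 2 : ℝ) < (n : ℂ).re := by rw [natCast_re]; linarith
    filter_upwards [Ioo_mem_nhdsLT (by norm_num : (2 / 3 : ℝ) < 1),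
      h_ray.eventually (h_lim.eventually (lt_mem_nhds h_half))] with s hs h_re
    exact ⟨hs, h_re⟩
  obtain ⟨s, ⟨hs23, hs1⟩, hs_re⟩ := h_near.exists
  refine ⟨s * z₀, ?_, ?_⟩
  · rw [mem_ball_zero_iff, norm_mul, norm_real, Real.norm_of_nonneg (by linarith)]
    exact (mul_le_of_le_one_left (norm_nonneg _) hs1.le).trans_lt (mem_ball_zero_iff.mp hz₀)
  set q := ((s : ℂ) * z₀ - z₀) * deriv F (s * z₀) / F (s * z₀)
  have h_split : (s : ℂ) * z₀ * deriv F (s * z₀) / F (s * z₀) = ((s / (s - 1) : ℝ) : ℂ) * q := by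
    have : (s : ℂ) - 1 ≠ 0 := by exact_mod_cast (sub_neg.mpr hs1).ne
    simp only [q]; push_cast; field_simp
  have h_num : 0 < s - 1 + s * q.re := by nlinarith
  have h_den : s - 1 < 0 := by linarith
  rw [h_split, add_re, one_re, re_ofReal_mul, div_mul_eq_mul_div,
    show 1 + s * q.re / (s - 1) = (s - 1 + s * q.re) / (s - 1) by field_simp [h_den.ne]]
  exact div_neg_of_pos_of_neg h_num h_den

theorem re_nonpos_of_mul_one_add_eq {p u : ℂ} {k : ℝ} (hu : ‖u‖ = 1) (hk : 1 ≤ k)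
    (h : p * (1 + u) = 1 - k * u) : p.re ≤ 0 := by
  have hu' : u.re ^ 2 + u.im ^ 2 = 1 := by
    have := Complex.sq_norm u
    rw [hu, normSq_apply] at this
    linarith
  have h_re : p.re * (1 + u.re) - p.im * u.im = 1 - k * u.re := by simpa using congrArg re h
  have h_im : p.re * u.im + p.im * (1 + u.re) = -(k * u.im) := by simpa using congrArg im h
  have key : (1 + u.re) * (2 * p.re - 1 + k) = 0 := by
    linear_combination (1 + u.re) * h_re + u.im * h_im - (p.re + k) * hu'
  rcases mul_eq_zero.mp key with h₁ | h₁
  · have : u.im = 0 := by nlinarith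
    simp only [this, h₁] at h_re
    nlinarith
  · linarith

theorem one_half_lt_re_inv_one_add {s : ℂ} (hs : ‖s‖ < 1) : 1 / 2 < (1 + s)⁻¹.re := by
  have hs' : s.re ^ 2 + s.im ^ 2 < 1 := by
    have := Complex.sq_norm s
    rw [normSq_apply] at this
    nlinarith [norm_nonneg s]
  rw [inv_re, normSq_apply]
  simp only [add_re, one_re, add_im, one_im, zero_add]
  rw [lt_div_iff₀ (by nlinarith)]
  nlinarith

theorem one_add_mul_deriv_div_mul_one_add_eq {f w : ℂ → ℂ} {z₀ : ℂ}
    (hf : f =ᶠ[𝓝 z₀] fun z => z * deriv f z * (1 + w z)) (hf' : DifferentiableAt ℂ (deriv f) z₀)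
    (hw : DifferentiableAt ℂ w z₀) (hne : deriv f z₀ ≠ 0) :
    (1 + z₀ * deriv (deriv f) z₀ / deriv f z₀) * (1 + w z₀) = 1 - z₀ * deriv w z₀ := by
  have hd : HasDerivAt (fun z => z * deriv f z * (1 + w z))
      ((deriv f z₀ + z₀ * deriv (deriv f) z₀) * (1 + w z₀) + z₀ * deriv f z₀ * deriv w z₀) z₀ := by
    simpa using ((hasDerivAt_id z₀).fun_mul hf'.hasDerivAt).fun_mul (hw.hasDerivAt.const_add 1)
  have h_deriv := hf.deriv_eq.trans hd.deriv
  field_simp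
  linear_combination -h_deriv

theorem one_half_lt_re_mul_deriv_div_of_convex {f : ℂ → ℂ} (hf : AnalyticOnNhd ℂ f (ball 0 1))
    (h₀ : f 0 = 0) (h₁ : deriv f 0 = 1)
    (hconv : ∀ z ∈ ball (0 : ℂ) 1, 0 < (1 + z * iteratedDeriv 2 f z / deriv f z).re) {z : ℂ}
    (hz : z ∈ ball (0 : ℂ) 1) (hz₀ : z ≠ 0) : 1 / 2 < (z * deriv f z / f z).re := by
  have hf' : AnalyticOnNhd ℂ (deriv f) (ball 0 1) := hf.deriv
  have h_two : iteratedDeriv 2 f = deriv (deriv f) := by rw [iteratedDeriv_succ, iteratedDeriv_one]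
  simp only [h_two] at hconv
  have hne : ∀ z ∈ ball (0 : ℂ) 1, deriv f z ≠ 0 := fun z hz hfz => by
    obtain ⟨ζ, hζ, h_neg⟩ :=
      exists_re_one_add_mul_deriv_div_neg hf' (by rw [h₁]; exact one_ne_zero) hz hfz
    exact (hconv ζ hζ).not_gt h_neg
  -- `w = f / (z f') - 1`, with the singularity at `0` removed
  set w : ℂ → ℂ := fun z => dslope f 0 z / deriv f z - 1
  have hw : DifferentiableOn ℂ w (ball 0 1) :=
    (((differentiableOn_dslope (ball_mem_nhds 0 one_pos)).mpr hf.differentiableOn).div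
      hf'.differentiableOn hne).sub_const 1
  have hw₀ : w 0 = 0 := by simp [w, h₁]
  have hf_eq : ∀ z ∈ ball (0 : ℂ) 1, f z = z * deriv f z * (1 + w z) := fun z hz => by
    have := sub_smul_dslope f 0 z
    simp only [sub_zero, h₀, smul_eq_mul] at this
    simp only [w]
    field_simp [hne z hz]
    linear_combination -this
  clear_value w
  have h_lt : ∀ z ∈ ball (0 : ℂ) 1, ‖w z‖ < 1 := by
    by_contra! h
    obtain ⟨z₁, hz₁, h_ge⟩ := h
    obtain ⟨z₀, hz₀, h_one, k, hk, h_jack⟩ :=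
      exists_mul_deriv_eq_real_mul_of_one_le_norm hw hw₀ hz₁ h_ge
    have h_id := one_add_mul_deriv_div_mul_one_add_eq
      (eventuallyEq_of_mem (isOpen_ball.mem_nhds hz₀) hf_eq) (hf' z₀ hz₀).differentiableAt
      ((hw z₀ hz₀).differentiableAt (isOpen_ball.mem_nhds hz₀)) (hne z₀ hz₀)
    rw [h_jack] at h_id
    exact (hconv z₀ hz₀).not_ge (re_nonpos_of_mul_one_add_eq h_one hk h_id)
  have h1w : 1 + w z ≠ 0 := fun h => by simpa [eq_neg_of_add_eq_zero_right h] using h_lt z hz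
  rw [show z * deriv f z / f z = (1 + w z)⁻¹ by
    rw [hf_eq z hz]; field_simp [hne z hz, hz₀, h1w]]
  exact one_half_lt_re_inv_one_add (h_lt z hz)

theorem deriv_sub_sq_div_three :
    deriv (fun z : ℂ => z - z ^ 2 / 3) = fun z => 1 - 2 * z / 3 := by
  ext z
  rw [((hasDerivAt_id' z).fun_sub ((hasDerivAt_pow 2 z).div_const 3)).deriv]
  ring

theorem iteratedDeriv_two_sub_sq_div_three (z : ℂ) :
    iteratedDeriv 2 (fun z : ℂ => z - z ^ 2 / 3) z = -2 / 3 := by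
  rw [iteratedDeriv_succ, iteratedDeriv_one, deriv_sub_sq_div_three]
  rw [((hasDerivAt_const z 1).fun_sub (((hasDerivAt_id' z).const_mul 2).div_const 3)).deriv]
  ring

theorem one_half_lt_re_mul_deriv_div_sub_sq_div_three {z : ℂ} (hz : ‖z‖ < 1) (hz₀ : z ≠ 0) :
    1 / 2 < (z * deriv (fun z : ℂ => z - z ^ 2 / 3) z / (z - z ^ 2 / 3)).re := by
  have h_lt : ‖z‖ < ‖3 - 2 * z‖ := by
    have := norm_sub_norm_le (3 : ℂ) (2 * z)
    rw [norm_mul] at this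
    norm_num at this
    linarith
  have h₂ : 3 - 2 * z ≠ 0 := norm_pos_iff.mp ((norm_nonneg z).trans_lt h_lt)
  have h₁ : 3 - z ≠ 0 := fun h => by
    rw [← sub_eq_zero.mp h] at hz
    norm_num at hz
  have h_eq : z * (1 - 2 * z / 3) / (z - z ^ 2 / 3) = (1 + z / (3 - 2 * z))⁻¹ := by
    rw [one_add_div h₂, inv_div, show 3 - 2 * z + z = 3 - z by ring]
    field_simp
  rw [deriv_sub_sq_div_three, h_eq]
  exact one_half_lt_re_inv_one_add (by rwa [norm_div, div_lt_one ((norm_nonneg z).trans_lt h_lt)])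

theorem re_one_add_mul_iteratedDeriv_div_sub_sq_div_three :
    (1 + (9 / 10 : ℂ) * iteratedDeriv 2 (fun z : ℂ => z - z ^ 2 / 3) (9 / 10) /
      deriv (fun z : ℂ => z - z ^ 2 / 3) (9 / 10)).re = -1 / 2 := by
  rw [iteratedDeriv_two_sub_sq_div_three, deriv_sub_sq_div_three]
  norm_num

theorem stmt15 :
    (∀ f : ℂ → ℂ, AnalyticOn ℂ f unitDisk → Normalized f →
      (∀ z ∈ unitDisk, 0 < (1 + z * iteratedDeriv 2 f z / deriv f z).re) →
      StarlikeOfOrder (1 / 2) f) ∧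
    StarlikeOfOrder (1 / 2) (fun z : ℂ => z - z ^ 2 / 3) ∧
    ¬ (∀ z ∈ unitDisk,
        0 < (1 + z * iteratedDeriv 2 (fun z : ℂ => z - z ^ 2 / 3) z /
          deriv (fun z : ℂ => z - z ^ 2 / 3) z).re) := by
  refine ⟨fun f hf hn hconv z hz hz₀ => ?_, fun z hz hz₀ => ?_, fun h => ?_⟩
  · exact one_half_lt_re_mul_deriv_div_of_convex
      (isOpen_ball.analyticOn_iff_analyticOnNhd.mp hf) hn.1 hn.2 hconv hz hz₀
  · exact one_half_lt_re_mul_deriv_div_sub_sq_div_three (mem_ball_zero_iff.mp hz) hz₀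
  · have := h (9 / 10) (by norm_num [unitDisk])
    rw [re_one_add_mul_iteratedDeriv_div_sub_sq_div_three] at this
    norm_num at this
end
end
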